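/- Let S(s) = ∑_{ℓ≥0} (−2)·((2ℓ+1)!!)⁵/((2ℓ+1)⁵·(10ℓ+3)!!) · s^{2ℓ+1} ∈ ℚ[[s]] and let θ = −(1/2)·s·d/ds. Then S satisfies s²(2θ−1)θ⁴S = 5(2θ+1)(5θ+1)(5θ+2)(5θ+3)(5θ+4)S. -/

import Mathlib

/-- The operator `θ = −(1/2)·s·d/ds` on formal power series over `ℚ`: `(θ f)ₙ = (−n/2)·fₙ`. -/
noncomputable def theta (f : PowerSeries ℚ) : PowerSeries ℚ :=
  PowerSeries.mk fun n => (-(n : ℚ) / 2) * PowerSeries.coeff n f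

/-- The Landau–Ginzburg disk potential
`S(s) = ∑_{ℓ ≥ 0} (−2)·((2ℓ+1)!!)⁵/((2ℓ+1)⁵·(10ℓ+3)!!) · s^{2ℓ+1}`
(for odd `n = 2ℓ+1` one has `(2ℓ+1)!! = n!!`, `(2ℓ+1)⁵ = n⁵` and `10ℓ+3 = 5n−2`). -/
noncomputable def S : PowerSeries ℚ :=
  PowerSeries.mk fun n =>
    if n % 2 = 1 then
      -2 * (Nat.doubleFactorial n : ℚ) ^ 5 /
        ((n : ℚ) ^ 5 * (Nat.doubleFactorial (5 * n - 2) : ℚ))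
    else 0

/-- The operator `5θ + a`. -/
noncomputable def A (a : ℚ) (f : PowerSeries ℚ) : PowerSeries ℚ :=
  (5 : ℚ) • theta f + a • f

/-! `θ` acts diagonally, `sⁿ ↦ (−n/2) sⁿ`, so comparing coefficients of `s^(n+2)` turns the equation
into the two-term recurrence `5 (5n+2)(5n+4)(5n+6)(5n+8) c_{n+2} = n⁴ c_n` for the coefficients of `S`.
For odd `n` this is the quotient of consecutive terms, since `(n+2)‼ = (n+2) n‼` and
`(5n+8)‼ = (5n+8)(5n+6)(5n+4)(5n+2)(5n) (5n−2)‼`; for even `n` both sides vanish. -/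

open PowerSeries Nat

lemma coeff_theta (f : PowerSeries ℚ) (n : ℕ) :
    coeff n (theta f) = -(n : ℚ) / 2 * coeff n f :=
  coeff_mk _ _

lemma coeff_A (a : ℚ) (f : PowerSeries ℚ) (n : ℕ) :
    coeff n (A a f) = (a - 5 * n / 2) * coeff n f := by
  simp only [A, map_add, coeff_smul, coeff_theta, smul_eq_mul]
  ring

lemma coeff_S_two_mul (k : ℕ) : coeff (2 * k) S = 0 := by
  simp [S]

lemma coeff_S_two_mul_add_one (k : ℕ) :
    coeff (2 * k + 1) S = -2 * ((2 * k + 1)‼ : ℚ) ^ 5 / ((2 * k + 1 : ℚ) ^ 5 * (10 * k + 3)‼) := by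
  simp [S, show 5 * (2 * k + 1) - 2 = 10 * k + 3 by omega]

lemma Nat.doubleFactorial_add_ten (n : ℕ) :
    (n + 10)‼ = (n + 10) * (n + 8) * (n + 6) * (n + 4) * (n + 2) * n‼ := by
  simp only [doubleFactorial_add_two, mul_assoc]

lemma coeff_S_add_two (n : ℕ) :
    5 * ((5 * n + 2) * (5 * n + 4) * (5 * n + 6) * (5 * n + 8)) * coeff (n + 2) S =
      (n : ℚ) ^ 4 * coeff n S := by
  obtain ⟨k, rfl | rfl⟩ := n.even_or_odd'
  · rw [show 2 * k + 2 = 2 * (k + 1) by ring, coeff_S_two_mul, coeff_S_two_mul]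
    ring
  · rw [show 2 * k + 1 + 2 = 2 * (k + 1) + 1 by ring, coeff_S_two_mul_add_one,
      coeff_S_two_mul_add_one, show 10 * (k + 1) + 3 = 10 * k + 3 + 10 by ring,
      doubleFactorial_add_ten, show 2 * (k + 1) + 1 = 2 * k + 1 + 2 by ring, doubleFactorial_add_two]
    have : ((10 * k + 3)‼ : ℚ) ≠ 0 := by exact_mod_cast (doubleFactorial_pos _).ne'
    push_cast
    field_simp
    ring

/-- `S` satisfies `s²(2θ−1)θ⁴S = 5(2θ+1)(5θ+1)(5θ+2)(5θ+3)(5θ+4)S`. -/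
theorem S_satisfies_extended_picard_fuchs_LG :
    PowerSeries.X ^ 2 *
        ((2 : ℚ) • theta (theta (theta (theta (theta S)))) - theta (theta (theta (theta S)))) =
      5 * ((2 : ℚ) • theta (A 1 (A 2 (A 3 (A 4 S)))) + A 1 (A 2 (A 3 (A 4 S)))) := by
  ext n
  rw [show (5 : PowerSeries ℚ) = C (5 : ℚ) from (map_ofNat C 5).symm]
  simp only [coeff_C_mul, coeff_X_pow_mul', map_add, map_sub, coeff_smul, smul_eq_mul, coeff_theta, coeff_A]
  rcases n with _ | _ | n
  · simp [coeff_S_two_mul 0]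
  · rw [if_neg (by omega)]
    ring
  · rw [if_pos (by omega), show n + 1 + 1 - 2 = n by omega]
    push_cast
    linear_combination ((n + 1 : ℚ) / 16) * coeff_S_add_two n
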